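/- arXiv:1310.3596 — 3 statements merged into one kernel-verified Lean document; each statement's English description precedes it below -/
import Mathlib

section
/- Let X_1,…,X_d be i.i.d. positive continuous random variables with cdf F and tail F̄ = 1 − F, and let M_d = max_{j≤d} X_j. Then P(X_1+⋯+X_d > γ) = d · E[ F̄( (γ − ∑_{j=1}^{d−1} X_j) ∨ max_{j<d} X_j ) ], where x ∨ y = max{x,y}. -/
open MeasureTheory ProbabilityTheory
open scoped ENNReal

private lemma ak_indep_measure_lt {Ω : Type*} [MeasurableSpace Ω] (μ : Measure Ω)
    [IsProbabilityMeasure μ] {T Z : Ω → ℝ} (hT : Measurable T) (hZ : Measurable Z)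
    (h : IndepFun T Z μ) :
    μ {ω | T ω < Z ω} = ∫⁻ ω, μ.map Z (Set.Ioi (T ω)) ∂μ := by
  have hmap : μ.map (fun ω => (T ω, Z ω)) = (μ.map T).prod (μ.map Z) :=
    (indepFun_iff_map_prod_eq_prod_map_map hT.aemeasurable hZ.aemeasurable).mp h
  have hs : MeasurableSet {p : ℝ × ℝ | p.1 < p.2} :=
    measurableSet_lt measurable_fst measurable_snd
  have h1 : μ {ω | T ω < Z ω} = μ.map (fun ω => (T ω, Z ω)) {p : ℝ × ℝ | p.1 < p.2} := by
    rw [Measure.map_apply (hT.prodMk hZ) hs]; rfl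
  have hanti : Measurable fun t : ℝ => μ.map Z (Set.Ioi t) :=
    Antitone.measurable fun a b hab => measure_mono (Set.Ioi_subset_Ioi hab)
  rw [h1, hmap, Measure.prod_apply hs]
  have hsec : ∀ t : ℝ, (Prod.mk t ⁻¹' {p : ℝ × ℝ | p.1 < p.2}) = Set.Ioi t := fun t => rfl
  simp_rw [hsec]
  exact lintegral_map hanti hT

/-- The Asmussen–Kroese identity:
`P(X_1+⋯+X_d > γ) = d · E[ F̄((γ − ∑_{j<d} X_j) ∨ max_{j<d} X_j) ]`,
where the first `d−1` variables appear on the right-hand side. -/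
theorem asmussen_kroese_identity
    {Ω : Type*} [MeasurableSpace Ω] (μ : Measure Ω) [IsProbabilityMeasure μ]
    (d : ℕ) (hd : 2 ≤ d) (X : Fin d → Ω → ℝ) (F : ℝ → ℝ) (γ : ℝ) (hγ : 0 < γ)
    (I : Finset (Fin d)) (hI : I = Finset.univ.filter (fun i => i.val < d - 1))
    (hIne : I.Nonempty)
    (hmeas : ∀ i, Measurable (X i))
    (hindep : iIndepFun X μ)
    (hcdf : ∀ i t, (μ {ω | X i ω ≤ t}).toReal = F t)
    (hpos : ∀ i, μ {ω | X i ω ≤ 0} = 0)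
    (hties : ∀ i j, i ≠ j → μ {ω | X i ω = X j ω} = 0) :
    (μ {ω | γ < ∑ i, X i ω}).toReal =
      d * ∫ ω, (1 - F (max (γ - ∑ i ∈ I, X i ω) (I.sup' hIne fun i => X i ω))) ∂μ := by
  classical
  have hdpos : 0 < d := by omega
  set L : Fin d := ⟨d - 1, by omega⟩ with hLdef
  have hIL : I = Finset.univ.erase L := by
    rw [hI]; ext i
    have hiv := i.isLt
    simp only [Finset.mem_filter, Finset.mem_univ, true_and, Finset.mem_erase, and_true,
      Ne, Fin.ext_iff, hLdef]
    omega
  have hLnotI : L ∉ I := by rw [hIL]; simp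
  -- the common marginal distribution
  set ρ : Measure ℝ := μ.map (X L) with hρdef
  haveI hρprob : IsProbabilityMeasure ρ :=
    Measure.isProbabilityMeasure_map (hmeas L).aemeasurable
  have hmapX : ∀ i, μ.map (X i) = ρ := by
    intro i
    haveI : IsProbabilityMeasure (μ.map (X i)) :=
      Measure.isProbabilityMeasure_map (hmeas i).aemeasurable
    refine Measure.ext_of_Iic _ _ (fun t => ?_)
    have h1 : μ.map (X i) (Set.Iic t) = μ {ω | X i ω ≤ t} := by
      rw [Measure.map_apply (hmeas i) measurableSet_Iic]; rfl
    have h2 : ρ (Set.Iic t) = μ {ω | X L ω ≤ t} := by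
      rw [hρdef, Measure.map_apply (hmeas L) measurableSet_Iic]; rfl
    rw [h1, h2]
    exact (ENNReal.toReal_eq_toReal_iff' (measure_ne_top μ _) (measure_ne_top μ _)).mp
      (by rw [hcdf i t, hcdf L t])
  -- the joint law is the product measure
  set V : Ω → (Fin d → ℝ) := fun ω i => X i ω with hVdef
  have hVmeas : Measurable V := measurable_pi_lambda _ hmeas
  set π : Measure (Fin d → ℝ) := Measure.pi (fun _ => ρ) with hπdef
  have hmapV : μ.map V = π := by
    rw [hπdef]
    refine (Measure.pi_eq (fun s hs => ?_)).symm
    rw [Measure.map_apply hVmeas (MeasurableSet.univ_pi hs)]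
    have hpre : V ⁻¹' Set.pi Set.univ s = ⋂ i ∈ Finset.univ, X i ⁻¹' s i := by
      ext ω; simp [Set.mem_pi, hVdef]
    rw [hpre, hindep.measure_inter_preimage_eq_mul Finset.univ (fun i _ => hs i)]
    exact Finset.prod_congr rfl fun i _ => by
      rw [← hmapX i, Measure.map_apply (hmeas i) (hs i)]
  -- ties are null
  have hties' : ∀ i j, i ≠ j → π {x : Fin d → ℝ | x i = x j} = 0 := by
    intro i j hij
    have hm : MeasurableSet {x : Fin d → ℝ | x i = x j} :=
      measurableSet_eq_fun (measurable_pi_apply i) (measurable_pi_apply j)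
    rw [← hmapV, Measure.map_apply hVmeas hm]
    exact hties i j hij
  -- the events "sum exceeds γ and coordinate k is the strict maximum"
  set B : Fin d → Set (Fin d → ℝ) :=
    fun k => {x | γ < ∑ i, x i ∧ ∀ j, j ≠ k → x j < x k} with hBdef
  have hsum_meas : Measurable fun x : Fin d → ℝ => ∑ i, x i :=
    Finset.measurable_sum _ (fun i _ => measurable_pi_apply i)
  have hBmeas : ∀ k, MeasurableSet (B k) := by
    intro k
    have h1 : MeasurableSet {x : Fin d → ℝ | γ < ∑ i, x i} :=
      measurableSet_lt measurable_const hsum_meas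
    have h2 : MeasurableSet {x : Fin d → ℝ | ∀ j, j ≠ k → x j < x k} := by
      have he : {x : Fin d → ℝ | ∀ j, j ≠ k → x j < x k}
          = ⋂ j, {x : Fin d → ℝ | j ≠ k → x j < x k} := by ext; simp
      rw [he]
      refine MeasurableSet.iInter fun j => ?_
      by_cases hj : j = k
      · subst hj; simp
      · simp only [hj, ne_eq, not_false_iff, true_implies]
        exact measurableSet_lt (measurable_pi_apply j) (measurable_pi_apply k)
    exact h1.inter h2
  have hdisjB : Pairwise (Function.onFun Disjoint B) := by
    intro k l hkl
    refine Set.disjoint_left.mpr fun x hxk hxl => ?_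
    exact lt_asymm (hxk.2 l hkl.symm) (hxl.2 k hkl)
  have hNnull : π (⋃ (i) (j) (_ : i ≠ j), {x : Fin d → ℝ | x i = x j}) = 0 :=
    measure_iUnion_null fun i => measure_iUnion_null fun j =>
      measure_iUnion_null fun hij => hties' i j hij
  have hScover : {x : Fin d → ℝ | γ < ∑ i, x i} ⊆
      (⋃ k, B k) ∪ ⋃ (i) (j) (_ : i ≠ j), {x : Fin d → ℝ | x i = x j} := by
    intro x hx
    haveI : Nonempty (Fin d) := ⟨L⟩
    obtain ⟨k, hk⟩ := Finite.exists_max x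
    by_cases hstrict : ∀ j, j ≠ k → x j < x k
    · exact Or.inl (Set.mem_iUnion.mpr ⟨k, hx, hstrict⟩)
    · push_neg at hstrict
      obtain ⟨j, hjk, hge⟩ := hstrict
      have hxe : x j = x k := le_antisymm (hk j) hge
      exact Or.inr (Set.mem_iUnion.mpr ⟨j, Set.mem_iUnion.mpr ⟨k,
        Set.mem_iUnion.mpr ⟨hjk, hxe⟩⟩⟩)
  have hBsubS : ∀ k, B k ⊆ {x : Fin d → ℝ | γ < ∑ i, x i} := fun k x hx => hx.1
  have hU : π (⋃ k, B k) = ∑ k : Fin d, π (B k) := by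
    rw [measure_iUnion hdisjB hBmeas, tsum_fintype]
  have hπS : π {x : Fin d → ℝ | γ < ∑ i, x i} = ∑ k : Fin d, π (B k) := by
    refine le_antisymm ?_ ?_
    · calc π {x : Fin d → ℝ | γ < ∑ i, x i}
          ≤ π ((⋃ k, B k) ∪ ⋃ (i) (j) (_ : i ≠ j), {x : Fin d → ℝ | x i = x j}) :=
            measure_mono hScover
        _ ≤ π (⋃ k, B k) + π (⋃ (i) (j) (_ : i ≠ j), {x : Fin d → ℝ | x i = x j}) :=
            measure_union_le _ _
        _ = ∑ k : Fin d, π (B k) := by rw [hNnull, add_zero, hU]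
    · rw [← hU]; exact measure_mono (Set.iUnion_subset hBsubS)
  -- exchangeability: all B k have the same measure
  have hswap : ∀ k, π (B k) = π (B L) := by
    intro k
    by_cases hkL : k = L
    · rw [hkL]
    · set e : Equiv.Perm (Fin d) := Equiv.swap k L with hedef
      set g : (Fin d → ℝ) → (Fin d → ℝ) := fun x => x ∘ e with hgdef
      have hg : Measurable g := measurable_pi_lambda _ fun i => measurable_pi_apply (e i)
      have hmapg : π.map g = π := by
        rw [hπdef]
        refine (Measure.pi_eq (fun s hs => ?_)).symm
        rw [Measure.map_apply hg (MeasurableSet.univ_pi hs)]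
        have hgp : g ⁻¹' Set.pi Set.univ s = Set.pi Set.univ (fun j => s (e.symm j)) := by
          ext x
          simp only [Set.mem_preimage, Set.mem_pi, Set.mem_univ, true_implies, hgdef,
            Function.comp]
          constructor
          · intro h j; have := h (e.symm j); rwa [Equiv.apply_symm_apply] at this
          · intro h i; have := h (e i); rwa [Equiv.symm_apply_apply] at this
        rw [hgp, Measure.pi_pi]
        exact Equiv.prod_comp e.symm fun i => ρ (s i)
      have heL : e L = k := Equiv.swap_apply_right k L
      have hee : ∀ j, e (e j) = j := fun j => Equiv.swap_apply_self k L j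
      have hpre : g ⁻¹' B L = B k := by
        ext x
        simp only [Set.mem_preimage, hBdef, Set.mem_setOf_eq, hgdef, Function.comp]
        constructor
        · rintro ⟨h1, h2⟩
          rw [Equiv.sum_comp e] at h1
          refine ⟨h1, fun j' hj' => ?_⟩
          have hne : e j' ≠ L := by
            intro hEq
            have h5 := congrArg e hEq
            rw [hee, heL] at h5
            exact hj' h5
          have h3 := h2 (e j') hne
          rwa [hee, heL] at h3
        · rintro ⟨h1, h2⟩
          rw [Equiv.sum_comp e]
          refine ⟨h1, fun j hj => ?_⟩
          rw [heL]
          refine h2 (e j) ?_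
          intro hEq
          have h5 := congrArg e hEq
          rw [hee, Equiv.swap_apply_left] at h5
          exact hj h5
      calc π (B k) = π (g ⁻¹' B L) := by rw [hpre]
        _ = π.map g (B L) := (Measure.map_apply hg (hBmeas L)).symm
        _ = π (B L) := by rw [hmapg]
  -- the event for the last coordinate, in Ω
  have hsum_split : ∀ ω, ∑ i ∈ I, X i ω + X L ω = ∑ i, X i ω := by
    intro ω; rw [hIL]; exact Finset.sum_erase_add _ _ (Finset.mem_univ L)
  set A : Set Ω :=
    {ω | max (γ - ∑ i ∈ I, X i ω) (I.sup' hIne fun i => X i ω) < X L ω} with hAdef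
  have hAeq : V ⁻¹' B L = A := by
    ext ω
    simp only [Set.mem_preimage, hBdef, hAdef, Set.mem_setOf_eq, hVdef, max_lt_iff]
    constructor
    · rintro ⟨h1, h2⟩
      have hs := hsum_split ω
      refine ⟨by linarith, ?_⟩
      rw [Finset.sup'_lt_iff]
      intro i hi
      exact h2 i (by rw [hIL] at hi; exact (Finset.mem_erase.mp hi).1)
    · rintro ⟨h1, h2⟩
      rw [Finset.sup'_lt_iff] at h2
      have hs := hsum_split ω
      refine ⟨by linarith, fun j hj => ?_⟩
      exact h2 j (by rw [hIL]; exact Finset.mem_erase.mpr ⟨hj, Finset.mem_univ j⟩)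
  have hμA : μ A = π (B L) := by
    rw [← hAeq, ← Measure.map_apply hVmeas (hBmeas L), hmapV]
  -- measurability of the RHS integrand ingredients
  have hsup_meas : Measurable fun ω => I.sup' hIne fun i => X i ω := by
    have h := Finset.measurable_sup' hIne (f := X) (fun i _ => hmeas i)
    have he : (I.sup' hIne X) = fun ω => I.sup' hIne fun i => X i ω := by
      funext ω; exact Finset.sup'_apply hIne X ω
    rwa [he] at h
  have hTm : Measurable fun ω => max (γ - ∑ i ∈ I, X i ω) (I.sup' hIne fun i => X i ω) :=
    Measurable.max (measurable_const.sub (Finset.measurable_sum I fun i _ => hmeas i)) hsup_meas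
  -- independence of the RHS statistic from X L
  haveI : Nonempty ↥I := ⟨⟨hIne.choose, hIne.choose_spec⟩⟩
  have hne' : (Finset.univ : Finset ↥I).Nonempty := Finset.univ_nonempty
  have hsup_coe : ∀ f : Fin d → ℝ,
      (Finset.univ.sup' hne' fun i : ↥I => f i) = I.sup' hIne f := by
    intro f
    apply le_antisymm
    · exact Finset.sup'_le _ _ fun i _ => Finset.le_sup' f i.2
    · exact Finset.sup'_le _ _ fun i hi =>
        Finset.le_sup' (fun j : ↥I => f j) (Finset.mem_univ (⟨i, hi⟩ : ↥I))
  have hindep2 : IndepFun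
      (fun ω => max (γ - ∑ i ∈ I, X i ω) (I.sup' hIne fun i => X i ω)) (X L) μ := by
    have hd0 : Disjoint I ({L} : Finset (Fin d)) := Finset.disjoint_singleton_right.mpr hLnotI
    have h := hindep.indepFun_finset I {L} hd0 hmeas
    set φ : (↥I → ℝ) → ℝ :=
      fun y => max (γ - ∑ i : ↥I, y i) (Finset.univ.sup' hne' y) with hφdef
    have hφ : Measurable φ := by
      refine Measurable.max (measurable_const.sub
        (Finset.measurable_sum _ fun i _ => measurable_pi_apply i)) ?_
      have h2 := Finset.measurable_sup' hne' (f := fun (i : ↥I) (y : ↥I → ℝ) => y i)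
        (fun i _ => measurable_pi_apply i)
      have he : (Finset.univ.sup' hne' fun (i : ↥I) (y : ↥I → ℝ) => y i)
          = fun y : ↥I → ℝ => Finset.univ.sup' hne' y := by
        funext y; exact Finset.sup'_apply hne' _ y
      rwa [he] at h2
    set ψ : (↥({L} : Finset (Fin d)) → ℝ) → ℝ :=
      fun y => y ⟨L, Finset.mem_singleton_self L⟩ with hψdef
    have hψ : Measurable ψ := measurable_pi_apply _
    have h2 := h.comp hφ hψ
    have hEq1 : (φ ∘ fun a (i : ↥I) => X i a)
        = fun ω => max (γ - ∑ i ∈ I, X i ω) (I.sup' hIne fun i => X i ω) := by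
      funext ω
      simp only [Function.comp, hφdef]
      rw [hsup_coe (fun i => X i ω), Finset.sum_coe_sort I (fun i => X i ω)]
    have hEq2 : (ψ ∘ fun a (i : ↥({L} : Finset (Fin d))) => X i a) = X L := by
      funext ω; rfl
    rwa [hEq1, hEq2] at h2
  -- properties of F
  have hF01 : ∀ t, 0 ≤ F t ∧ F t ≤ 1 := by
    intro t
    rw [← hcdf L t]
    refine ⟨ENNReal.toReal_nonneg, ?_⟩
    calc (μ {ω | X L ω ≤ t}).toReal ≤ (1 : ℝ≥0∞).toReal :=
          ENNReal.toReal_mono ENNReal.one_ne_top prob_le_one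
      _ = 1 := by simp
  have hFmono : Monotone F := by
    intro a b hab
    rw [← hcdf L a, ← hcdf L b]
    exact ENNReal.toReal_mono (measure_ne_top μ _)
      (measure_mono fun ω h => le_trans h hab)
  have hρIoi : ∀ t, ρ (Set.Ioi t) = ENNReal.ofReal (1 - F t) := by
    intro t
    have hIic : ρ (Set.Iic t) = ENNReal.ofReal (F t) := by
      have h1 : ρ (Set.Iic t) = μ {ω | X L ω ≤ t} := by
        rw [hρdef, Measure.map_apply (hmeas L) measurableSet_Iic]; rfl
      rw [h1, ← hcdf L t, ENNReal.ofReal_toReal (measure_ne_top μ _)]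
    rw [ENNReal.ofReal_sub 1 (hF01 t).1, ENNReal.ofReal_one, ← hIic,
      ← Set.compl_Iic, measure_compl measurableSet_Iic (measure_ne_top ρ _), measure_univ]
  -- compute μ A
  have hμA2 : μ A = ∫⁻ ω, ENNReal.ofReal
      (1 - F (max (γ - ∑ i ∈ I, X i ω) (I.sup' hIne fun i => X i ω))) ∂μ := by
    rw [hAdef]
    rw [ak_indep_measure_lt μ hTm (hmeas L) hindep2]
    rw [← hρdef]
    simp_rw [hρIoi]
  have hint : ∫ ω, (1 - F (max (γ - ∑ i ∈ I, X i ω) (I.sup' hIne fun i => X i ω))) ∂μ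
      = (μ A).toReal := by
    have hnonneg : 0 ≤ᵐ[μ]
        fun ω => 1 - F ((γ - ∑ i ∈ I, X i ω) ⊔ I.sup' hIne fun i => X i ω) :=
      MeasureTheory.ae_of_all μ fun ω => by
        have h9 := (hF01 ((γ - ∑ i ∈ I, X i ω) ⊔ I.sup' hIne fun i => X i ω)).2
        simp only [Pi.zero_apply]
        linarith
    have hms : AEStronglyMeasurable
        (fun ω => 1 - F ((γ - ∑ i ∈ I, X i ω) ⊔ I.sup' hIne fun i => X i ω)) μ :=
      (measurable_const.sub (hFmono.measurable.comp hTm)).aestronglyMeasurable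
    rw [integral_eq_lintegral_of_nonneg_ae hnonneg hms, hμA2]
  -- putting it all together
  have hLHS : μ {ω | γ < ∑ i, X i ω} = π {x : Fin d → ℝ | γ < ∑ i, x i} := by
    rw [← hmapV, Measure.map_apply hVmeas (measurableSet_lt measurable_const hsum_meas)]
    rfl
  have hcount : ∑ k : Fin d, π (B k) = (d : ℝ≥0∞) * π (B L) := by
    rw [Finset.sum_congr rfl fun k _ => hswap k, Finset.sum_const, Finset.card_univ,
      Fintype.card_fin, nsmul_eq_mul]
  rw [hLHS, hπS, hcount, ← hμA, hint, ENNReal.toReal_mul, ENNReal.toReal_natCast]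
end

section
/- Let X_1,…,X_d be i.i.d. positive random variables with a subexponential distribution F satisfying Kesten's bound: for some ε > 0 and constant c_1, F̄^{*k}(x) ≤ c_1(1+ε)^k F̄(x) for all x ≥ 0 and k ≥ 2. Let Z = 𝟙{S(X) > γ} ∏_{i=1}^d F̄^{*d}(γ)/F̄^{*(d−1)}(γ − X_i) with the convention F̄^{*(d−1)}(t) = 1 for t ≤ 0, and let ℓ = F̄^{*d}(γ), M_d = max_i X_i. Then E[𝟙{M_d > γ} Z] / ℓ² ≤ c_1^{d−1}(1+ε)^{d(d−1)}, uniformly in γ; in particular limsup_{γ→∞} E[𝟙{M_d > γ} Z]/ℓ² < ∞. -/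
open MeasureTheory ProbabilityTheory Filter

/-- For i.i.d. positive subexponential jumps satisfying Kesten's bound, the contribution
of the event `{M_d > γ}` to the relative second moment of the semiparametric estimator is
bounded by `c1^{d−1}(1+ε)^{d(d−1)}`, uniformly in `γ ≥ 0`. -/
theorem first_term_bounded_relative_error
    {Ω : Type*} [MeasurableSpace Ω] (μ : Measure Ω) [IsProbabilityMeasure μ]
    (X : ℕ → Ω → ℝ) (F : ℝ → ℝ) (Fbark : ℕ → ℝ → ℝ)
    (d : ℕ) (hd : 2 ≤ d) (c1 ε : ℝ) (hc1 : 0 < c1) (hε : 0 < ε)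
    (hmeas : ∀ j, Measurable (X j))
    (hindep : iIndepFun X μ)
    (hcdf : ∀ j t, (μ {ω | X j ω ≤ t}).toReal = F t)
    (hpos : ∀ j, μ {ω | X j ω ≤ 0} = 0)
    (hFbark : ∀ k t, Fbark k t = (μ {ω | t < ∑ j ∈ Finset.range k, X j ω}).toReal)
    (hsubexp : ∀ k : ℕ, 1 ≤ k →
      Tendsto (fun γ => Fbark k γ / Fbark 1 γ) atTop (nhds (k : ℝ)))
    (hkesten : ∀ k : ℕ, 2 ≤ k → ∀ x : ℝ, 0 ≤ x →
      Fbark k x ≤ c1 * (1 + ε) ^ k * Fbark 1 x)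
    (γ : ℝ) (hγ : 0 ≤ γ) (hℓ : 0 < Fbark d γ) :
    (∫ ω, (if (γ < ∑ j ∈ Finset.range d, X j ω ∧ ∃ j ∈ Finset.range d, γ < X j ω) then
        ∏ j ∈ Finset.range d, Fbark d γ / Fbark (d - 1) (γ - X j ω) else 0) ∂μ) /
      (Fbark d γ) ^ 2
      ≤ c1 ^ (d - 1) * (1 + ε) ^ (d * (d - 1)) := by
  classical
  have hε1 : (0:ℝ) < 1 + ε := by linarith
  have hCpos : (0:ℝ) < c1 * (1 + ε) ^ d := by positivity
  -- basic bounds on Fbark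
  have hFnonneg : ∀ k t, 0 ≤ Fbark k t := fun k t => by
    rw [hFbark]; exact ENNReal.toReal_nonneg
  have hFle1 : ∀ k t, Fbark k t ≤ 1 := fun k t => by
    rw [hFbark]
    exact ENNReal.toReal_le_of_le_ofReal zero_le_one (by simpa using prob_le_one)
  -- all jumps are positive a.s.
  have hNull : ∀ k : ℕ, μ {ω | ∃ j ∈ Finset.range k, X j ω ≤ 0} = 0 := by
    intro k
    refine measure_mono_null (fun ω hω => ?_) (measure_iUnion_null fun j => hpos j)
    obtain ⟨j, _, hj⟩ := hω
    exact Set.mem_iUnion.mpr ⟨j, hj⟩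
  -- Tail of a convolution at a negative point equals 1
  have hFone : ∀ k : ℕ, 1 ≤ k → ∀ t : ℝ, t < 0 → Fbark k t = 1 := by
    intro k hk t ht
    rw [hFbark]
    have hmS : MeasurableSet {ω | t < ∑ j ∈ Finset.range k, X j ω} :=
      measurableSet_lt measurable_const (Finset.measurable_sum _ fun j _ => hmeas j)
    have hcompl : μ {ω | t < ∑ j ∈ Finset.range k, X j ω}ᶜ = 0 := by
      refine measure_mono_null (fun ω hω => ?_) (hNull k)
      simp only [Set.mem_compl_iff, Set.mem_setOf_eq, not_lt] at hω
      by_contra hcon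
      simp only [Set.mem_setOf_eq, not_exists, not_and, not_le] at hcon
      have hsum : 0 < ∑ j ∈ Finset.range k, X j ω :=
        Finset.sum_pos (fun j hj => hcon j hj)
          ⟨0, Finset.mem_range.mpr (by omega)⟩
      linarith
    have h1 : μ {ω | t < ∑ j ∈ Finset.range k, X j ω} = 1 :=
      (prob_compl_eq_zero_iff hmS).mp hcompl
    rw [h1, ENNReal.toReal_one]
  -- Monotonicity: Fbark 1 γ ≤ Fbark k s for s ≤ γ, k ≥ 1
  have hFmono : ∀ k : ℕ, 1 ≤ k → ∀ s : ℝ, s ≤ γ → Fbark 1 γ ≤ Fbark k s := by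
    intro k hk s hs
    rw [hFbark 1 γ, hFbark k s]
    have hsub : {ω | γ < ∑ j ∈ Finset.range 1, X j ω} ⊆
        {ω | s < ∑ j ∈ Finset.range k, X j ω} ∪ {ω | ∃ j ∈ Finset.range k, X j ω ≤ 0} := by
      intro ω hω
      simp only [Set.mem_setOf_eq, Finset.sum_range_one] at hω
      by_cases hpos' : ∀ j ∈ Finset.range k, 0 < X j ω
      · left
        have h0 : X 0 ω ≤ ∑ j ∈ Finset.range k, X j ω :=
          Finset.single_le_sum (fun j hj => (hpos' j hj).le) (Finset.mem_range.mpr hk)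
        exact lt_of_le_of_lt hs (lt_of_lt_of_le hω h0)
      · right
        push_neg at hpos'
        obtain ⟨j, hj, hj'⟩ := hpos'
        exact ⟨j, hj, hj'⟩
    have h2 := measure_union_le (μ := μ) {ω | s < ∑ j ∈ Finset.range k, X j ω}
      {ω | ∃ j ∈ Finset.range k, X j ω ≤ 0}
    rw [hNull k, add_zero] at h2
    exact ENNReal.toReal_mono (measure_ne_top μ _) ((measure_mono hsub).trans h2)
  have hF1pos : 0 < Fbark 1 γ := by
    have hk := hkesten d hd γ hγ
    nlinarith [hFnonneg 1 γ]
  -- measurability of the sum event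
  have hmeasS : Measurable fun ω => ∑ j ∈ Finset.range d, X j ω :=
    Finset.measurable_sum _ fun j _ => hmeas j
  have hTmeas : MeasurableSet {ω | γ < ∑ j ∈ Finset.range d, X j ω} :=
    measurableSet_lt measurable_const hmeasS
  -- the bounding function
  set K : ℝ := Fbark d γ * (c1 * (1 + ε) ^ d) ^ (d - 1) with hKdef
  have hKnonneg : 0 ≤ K := mul_nonneg (hFnonneg d γ) (pow_nonneg hCpos.le _)
  set g : Ω → ℝ := Set.indicator {ω | γ < ∑ j ∈ Finset.range d, X j ω} (fun _ => K) with hgdef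
  -- a.e. pointwise bound
  have h0 : ∀ᵐ ω ∂μ, ∀ j ∈ Finset.range d, 0 < X j ω := by
    rw [ae_iff]
    refine measure_mono_null (fun ω hω => ?_) (hNull d)
    simp only [Set.mem_setOf_eq] at hω ⊢
    push_neg at hω
    exact hω
  have hae : ∀ᵐ ω ∂μ,
      (if (γ < ∑ j ∈ Finset.range d, X j ω ∧ ∃ j ∈ Finset.range d, γ < X j ω) then
        ∏ j ∈ Finset.range d, Fbark d γ / Fbark (d - 1) (γ - X j ω) else 0) ≤ g ω := by
    filter_upwards [h0] with ω hω
    by_cases hcond : γ < ∑ j ∈ Finset.range d, X j ω ∧ ∃ j ∈ Finset.range d, γ < X j ω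
    · rw [if_pos hcond]
      obtain ⟨hSω, j0, hj0, hXj0⟩ := hcond
      have hmem : ω ∈ {ω | γ < ∑ j ∈ Finset.range d, X j ω} := hSω
      have hgval : g ω = K := by
        rw [hgdef]; exact Set.indicator_of_mem hmem _
      rw [hgval]
      have hfac_le : ∀ j ∈ Finset.range d,
          Fbark d γ / Fbark (d - 1) (γ - X j ω) ≤ c1 * (1 + ε) ^ d := by
        intro j hj
        have hXj : 0 < X j ω := hω j hj
        have hden : Fbark 1 γ ≤ Fbark (d - 1) (γ - X j ω) :=
          hFmono (d - 1) (by omega) _ (by linarith)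
        rw [div_le_iff₀ (lt_of_lt_of_le hF1pos hden)]
        calc Fbark d γ ≤ c1 * (1 + ε) ^ d * Fbark 1 γ := hkesten d hd γ hγ
          _ ≤ c1 * (1 + ε) ^ d * Fbark (d - 1) (γ - X j ω) :=
              mul_le_mul_of_nonneg_left hden hCpos.le
      have hj0eq : Fbark d γ / Fbark (d - 1) (γ - X j0 ω) = Fbark d γ := by
        rw [hFone (d - 1) (by omega) _ (by linarith), div_one]
      rw [← Finset.mul_prod_erase _ _ hj0, hj0eq, hKdef]
      refine mul_le_mul_of_nonneg_left ?_ (hFnonneg d γ)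
      calc ∏ j ∈ (Finset.range d).erase j0, Fbark d γ / Fbark (d - 1) (γ - X j ω)
          ≤ ∏ _j ∈ (Finset.range d).erase j0, (c1 * (1 + ε) ^ d) :=
            Finset.prod_le_prod
              (fun j _ => div_nonneg (hFnonneg d γ) (hFnonneg _ _))
              (fun j hj => hfac_le j (Finset.mem_of_mem_erase hj))
        _ = (c1 * (1 + ε) ^ d) ^ (d - 1) := by
            rw [Finset.prod_const, Finset.card_erase_of_mem hj0, Finset.card_range]
    · rw [if_neg hcond]
      exact Set.indicator_nonneg (fun _ _ => hKnonneg) ω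
  have hnonneg : ∀ᵐ ω ∂μ, (0:ℝ) ≤
      (if (γ < ∑ j ∈ Finset.range d, X j ω ∧ ∃ j ∈ Finset.range d, γ < X j ω) then
        ∏ j ∈ Finset.range d, Fbark d γ / Fbark (d - 1) (γ - X j ω) else 0) := by
    refine Eventually.of_forall fun ω => ?_
    split
    · exact Finset.prod_nonneg fun j _ => div_nonneg (hFnonneg d γ) (hFnonneg _ _)
    · exact le_refl 0
  have hgint : Integrable g μ := (integrable_const K).indicator hTmeas
  have hIle := integral_mono_of_nonneg hnonneg hgint hae
  have hg_val : ∫ ω, g ω ∂μ = Fbark d γ * K := by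
    rw [hgdef, integral_indicator hTmeas, setIntegral_const, smul_eq_mul, measureReal_def, ← hFbark d γ]
  rw [div_le_iff₀ (pow_pos hℓ 2)]
  calc (∫ ω, (if (γ < ∑ j ∈ Finset.range d, X j ω ∧ ∃ j ∈ Finset.range d, γ < X j ω) then
        ∏ j ∈ Finset.range d, Fbark d γ / Fbark (d - 1) (γ - X j ω) else 0) ∂μ)
      ≤ Fbark d γ * K := by rw [← hg_val]; exact hIle
    _ = c1 ^ (d - 1) * (1 + ε) ^ (d * (d - 1)) * Fbark d γ ^ 2 := by
        rw [hKdef, mul_pow, pow_mul]; ring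
end

section
/- For every integer d > 2 and every α ∈ (0,1), the quantity d − 2 + d^{1−α} − d^{1−α}(d−1)^α is strictly positive. -/
/-- For every integer `d > 2` and `α ∈ (0,1)`, the minimum value
`d − 2 + d^{1−α} − d^{1−α}(d−1)^α` is strictly positive. -/
theorem laplace_exponent_min_pos
    (d : ℕ) (hd : 2 < d) (α : ℝ) (hα : α ∈ Set.Ioo (0 : ℝ) 1) :
    0 < (d : ℝ) - 2 + (d : ℝ) ^ (1 - α) - (d : ℝ) ^ (1 - α) * ((d : ℝ) - 1) ^ α := by
  obtain ⟨hα0, hα1⟩ := hα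
  have hd3 : (3 : ℝ) ≤ (d : ℝ) := by exact_mod_cast hd
  -- weighted AM-GM: d^{1-α} * (d-1)^α ≤ (1-α)*d + α*(d-1) = d - α
  have hamgm : (d : ℝ) ^ (1 - α) * ((d : ℝ) - 1) ^ α ≤ (1 - α) * d + α * ((d : ℝ) - 1) := by
    apply Real.geom_mean_le_arith_mean2_weighted (by linarith) (by linarith)
      (by linarith) (by linarith) (by ring)
  -- d^{1-α} ≥ 3^{1-α}
  have h1 : (3 : ℝ) ^ (1 - α) ≤ (d : ℝ) ^ (1 - α) :=
    Real.rpow_le_rpow (by norm_num) hd3 (by linarith)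
  -- log 3 > 1
  have hlog : (1 : ℝ) < Real.log 3 := by
    rw [Real.lt_log_iff_exp_lt (by norm_num)]
    have := Real.exp_one_lt_d9
    linarith
  -- 3^{1-α} > 2 - α
  have h2 : 2 - α < (3 : ℝ) ^ (1 - α) := by
    have hne : (1 - α) * Real.log 3 ≠ 0 := by
      have : 0 < (1 - α) * Real.log 3 := mul_pos (by linarith) (by linarith)
      exact ne_of_gt this
    have hexp : (1 - α) * Real.log 3 + 1 < Real.exp ((1 - α) * Real.log 3) :=
      Real.add_one_lt_exp hne
    have heq : Real.exp ((1 - α) * Real.log 3) = (3 : ℝ) ^ (1 - α) := by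
      rw [Real.rpow_def_of_pos (by norm_num), mul_comm]
    have hgt : 1 - α ≤ (1 - α) * Real.log 3 := by
      nlinarith
    linarith [heq ▸ hexp]
  nlinarith
end
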